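/- arXiv:2208.13733 — 5 statements merged into one kernel-verified Lean document; each statement's English description precedes it below -/
import Mathlib

section
/- If X is a random variable with density f_X(x) = π/(2·cosh²(πx)) on ℝ, then its characteristic function is E(e^{iθX}) = (θ/2)/sinh(θ/2) for all real θ ≠ 0 (and equals 1 at θ = 0). -/
open MeasureTheory Complex
open scoped Real

/-!
Substituting `u = σ(2πx)`, with `σ` the logistic sigmoid, turns `π / (2 cosh² (πx)) dx` into `du`
on `(0, 1)`, and, because `log σ(s) - log (1 - σ(s)) = s`, turns `e^{iθx}` into `u^a (1 - u)^{-a}`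
with `a = iθ/(2π)`. The characteristic function is therefore `B(1 + a, 1 - a) = Γ(1 + a) Γ(1 - a)`,
which Euler's reflection formula evaluates to `πa / sin(πa) = (θ/2) / sinh(θ/2)`.
-/

lemma Real.log_one_sub_sigmoid (s : ℝ) : Real.log (1 - sigmoid s) = Real.log (sigmoid s) - s := by
  rw [← sigmoid_neg, ← sigmoid_mul_rexp_neg, log_mul (sigmoid_pos s).ne' (exp_pos _).ne', log_exp]
  ring

lemma Real.sigmoid_mul_one_sub_sigmoid (s : ℝ) :
    sigmoid s * (1 - sigmoid s) = (4 * Real.cosh (s / 2) ^ 2)⁻¹ := by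
  rw [← sigmoid_neg, sigmoid_def, sigmoid_def, cosh_eq]
  have h : rexp (-s) = rexp (-(s / 2)) ^ 2 := by rw [← exp_nat_mul]; ring_nf
  have h' : rexp (- -s) = rexp (s / 2) ^ 2 := by rw [← exp_nat_mul]; ring_nf
  rw [h, h', exp_neg (s / 2)]
  field_simp
  ring

lemma integral_cexp_mul_sigmoid_mul_one_sub_sigmoid (w : ℂ) :
    ∫ s : ℝ, cexp (w * s) * ((Real.sigmoid s * (1 - Real.sigmoid s) : ℝ) : ℂ) =
      betaIntegral (1 + w) (1 - w) := by
  rw [betaIntegral, intervalIntegral.integral_of_le zero_le_one, integral_Ioc_eq_integral_Ioo,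
    ← Real.range_sigmoid, ← Set.image_univ,
    integral_image_eq_integral_abs_deriv_smul MeasurableSet.univ
      (fun s _ => (Real.hasDerivAt_sigmoid s).hasDerivWithinAt) Real.sigmoid_injective.injOn,
    Measure.restrict_univ]
  refine integral_congr_ae (Filter.Eventually.of_forall fun s => ?_)
  have hσ := Real.sigmoid_pos s
  have hσ' : 0 < 1 - Real.sigmoid s := sub_pos.2 (Real.sigmoid_lt_one s)
  have hpow : (Real.sigmoid s : ℂ) ^ (1 + w - 1) * (1 - (Real.sigmoid s : ℂ)) ^ (1 - w - 1) =
      cexp (w * s) := by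
    rw [← ofReal_one, ← ofReal_sub, cpow_def_of_ne_zero (ofReal_ne_zero.2 hσ.ne'),
      cpow_def_of_ne_zero (ofReal_ne_zero.2 hσ'.ne'), ← ofReal_log hσ.le, ← ofReal_log hσ'.le,
      ← Complex.exp_add, Real.log_one_sub_sigmoid]
    push_cast
    ring_nf
  simp only [abs_of_pos (mul_pos hσ hσ'), real_smul, hpow, mul_comm]

lemma betaIntegral_one_add_one_sub {w : ℂ} (hw : |w.re| < 1) (hw0 : w ≠ 0) :
    betaIntegral (1 + w) (1 - w) = π * w / sin (π * w) := by
  have h1 : 0 < (1 + w).re := by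
    rw [add_re, one_re]; linarith [neg_abs_le w.re]
  have h2 : 0 < (1 - w).re := by
    rw [sub_re, one_re]; linarith [le_abs_self w.re]
  have hΓ2 : Gamma 2 = 1 := by simp
  have hΓ : Gamma (1 + w) = w * Gamma w := by rw [add_comm]; exact Gamma_add_one _ hw0
  have h := Gamma_mul_Gamma_eq_betaIntegral h1 h2
  rw [add_add_sub_cancel, one_add_one_eq_two, hΓ2, one_mul, hΓ, mul_assoc,
    Gamma_mul_Gamma_one_sub] at h
  rw [← h]
  ring

lemma integral_cexp_mul_pi_div_two_cosh_sq (θ : ℝ) :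
    ∫ x : ℝ, cexp (θ * x * I) * ((π / (2 * Real.cosh (π * x) ^ 2) : ℝ) : ℂ) =
      betaIntegral (1 + θ * I / (2 * π)) (1 - θ * I / (2 * π)) := by
  set f : ℝ → ℂ := fun s => cexp (θ * I / (2 * π) * s) *
    ((Real.sigmoid s * (1 - Real.sigmoid s) : ℝ) : ℂ)
  have hπ : 0 < 2 * π := by positivity
  have hf (x : ℝ) : cexp (θ * x * I) * ((π / (2 * Real.cosh (π * x) ^ 2) : ℝ) : ℂ) =
      (2 * π) • f (2 * π * x) := by
    have hπc : (π : ℂ) ≠ 0 := ofReal_ne_zero.2 Real.pi_ne_zero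
    simp only [f, Real.sigmoid_mul_one_sub_sigmoid, real_smul]
    push_cast
    field_simp
    norm_num
  calc _ = ∫ x : ℝ, (2 * π) • f (2 * π * x) := integral_congr_ae (.of_forall hf)
    _ = _ := by
      rw [integral_smul, Measure.integral_comp_mul_left,
        integral_cexp_mul_sigmoid_mul_one_sub_sigmoid, abs_of_pos (inv_pos.2 hπ), smul_smul, mul_inv_cancel₀ hπ.ne', one_smul]

theorem stmt_2 :
    (∀ θ : ℝ, θ ≠ 0 →
        (∫ x : ℝ, Complex.exp ((θ : ℂ) * x * Complex.I) *
            ((π / (2 * Real.cosh (π * x) ^ 2) : ℝ) : ℂ)) =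
          (((θ / 2) / Real.sinh (θ / 2) : ℝ) : ℂ)) ∧
      (∫ x : ℝ, Complex.exp (((0 : ℝ) : ℂ) * x * Complex.I) *
          ((π / (2 * Real.cosh (π * x) ^ 2) : ℝ) : ℂ)) = 1 := by
  refine ⟨fun θ hθ => ?_, ?_⟩
  · have hw : θ * I / (2 * π) ≠ 0 := by simp [hθ, Real.pi_ne_zero]
    have hπw : π * (θ * I / (2 * π)) = (θ / 2 : ℝ) * I := by
      push_cast
      field_simp [ofReal_ne_zero.2 Real.pi_ne_zero]
    have hre : |(θ * I / (2 * π)).re| < 1 := by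
      simp [← ofReal_ofNat, ← ofReal_mul, div_ofReal_re]
    rw [integral_cexp_mul_pi_div_two_cosh_sq, betaIntegral_one_add_one_sub hre hw, hπw, sin_mul_I,
      ← ofReal_sinh, mul_div_mul_right _ _ I_ne_zero, ← ofReal_div]
  · rw [integral_cexp_mul_pi_div_two_cosh_sq]
    simp [betaIntegral_eval_one_right]
end

section
/- For real s > 1 and a ≥ 1, (s-1)·Γ(s)·ζ(s,a) = ∫₀^∞ x^{s-1} e^{-ax} [ax - 1 + e^{-x}(1 - (a-1)x)]/(1 - e^{-x})² dx. -/
/-!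
For `b > 0` the Gamma integral gives `∫₀^∞ (b x - c) x^{s-1} e^{-bx} dx = (s - c) Γ(s) b^{-s}`,
since the `b x` part is `b · Γ(s+1) b^{-s-1} = s Γ(s) b^{-s}`. With `c = 1` and `b = n + a`,
summing over `n` produces `(s - 1) Γ(s) ζ(s, a)`; on the other side, with `r = e^{-x}`, the
series `∑ ((n + a) x - 1) rⁿ` is arithmetico-geometric with sum
`(a x - 1 + r (1 - (a - 1) x)) / (1 - r)²`. Sum and integral may be interchanged because the
case `c = -1` bounds the integrals of the absolute values by `(s + 1) Γ(s) (n + a)^{-s}`.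
-/

open MeasureTheory Set Real

section GammaIntegral

variable {s b : ℝ}

lemma integrableOn_rpow_sub_one_mul_exp_neg_mul (hs : 0 < s) (hb : 0 < b) :
    IntegrableOn (fun x : ℝ => x ^ (s - 1) * exp (-(b * x))) (Ioi 0) := by
  simpa [rpow_one, neg_mul] using
    integrableOn_rpow_mul_exp_neg_mul_rpow (p := 1) (by linarith) zero_lt_one hb

lemma integral_rpow_sub_one_mul_exp_neg_mul (hs : 0 < s) (hb : 0 < b) :
    ∫ x in Ioi 0, x ^ (s - 1) * exp (-(b * x)) = Gamma s * b ^ (-s) := by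
  rw [integral_rpow_mul_exp_neg_mul_Ioi hs hb, one_div, inv_rpow hb.le, ← rpow_neg hb.le,
    mul_comm]

lemma mul_sub_mul_rpow_sub_one_mul_exp_neg_mul {x : ℝ} (hx : 0 < x) (c : ℝ) :
    (b * x - c) * (x ^ (s - 1) * exp (-(b * x))) =
      b * (x ^ (s + 1 - 1) * exp (-(b * x))) - c * (x ^ (s - 1) * exp (-(b * x))) := by
  rw [add_sub_cancel_right, ← sub_add_cancel s 1, rpow_add_one hx.ne', add_sub_cancel_right]
  ring

lemma integrableOn_mul_sub_mul_rpow_sub_one_mul_exp_neg_mul (hs : 0 < s) (hb : 0 < b) (c : ℝ) :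
    IntegrableOn (fun x : ℝ => (b * x - c) * (x ^ (s - 1) * exp (-(b * x)))) (Ioi 0) := by
  refine IntegrableOn.congr_fun ?_
    (fun x hx => (mul_sub_mul_rpow_sub_one_mul_exp_neg_mul hx c).symm) measurableSet_Ioi
  exact ((integrableOn_rpow_sub_one_mul_exp_neg_mul (by linarith) hb).const_mul b).sub
    ((integrableOn_rpow_sub_one_mul_exp_neg_mul hs hb).const_mul c)

lemma integral_mul_sub_mul_rpow_sub_one_mul_exp_neg_mul (hs : 0 < s) (hb : 0 < b) (c : ℝ) :
    ∫ x in Ioi 0, (b * x - c) * (x ^ (s - 1) * exp (-(b * x))) =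
      (s - c) * Gamma s * b ^ (-s) := by
  have hs' : 0 < s + 1 := by linarith
  rw [setIntegral_congr_fun measurableSet_Ioi
      (fun x hx => mul_sub_mul_rpow_sub_one_mul_exp_neg_mul hx c),
    integral_sub ((integrableOn_rpow_sub_one_mul_exp_neg_mul hs' hb).const_mul b)
      ((integrableOn_rpow_sub_one_mul_exp_neg_mul hs hb).const_mul c),
    integral_const_mul, integral_const_mul, integral_rpow_sub_one_mul_exp_neg_mul hs' hb,
    integral_rpow_sub_one_mul_exp_neg_mul hs hb, Gamma_add_one hs.ne', neg_add, rpow_add hb,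
    rpow_neg_one]
  field_simp

lemma integral_norm_mul_sub_one_mul_rpow_sub_one_mul_exp_neg_mul_le (hs : 0 < s) (hb : 0 < b) :
    ∫ x in Ioi 0, ‖(b * x - 1) * (x ^ (s - 1) * exp (-(b * x)))‖ ≤
      (s + 1) * Gamma s * b ^ (-s) := by
  rw [← sub_neg_eq_add, ← integral_mul_sub_mul_rpow_sub_one_mul_exp_neg_mul hs hb]
  refine setIntegral_mono_on
    (integrableOn_mul_sub_mul_rpow_sub_one_mul_exp_neg_mul hs hb 1).norm
    (integrableOn_mul_sub_mul_rpow_sub_one_mul_exp_neg_mul hs hb (-1)) measurableSet_Ioi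
    fun x (hx : 0 < x) => ?_
  rw [norm_mul, norm_eq_abs, norm_of_nonneg (by positivity : 0 ≤ x ^ (s - 1) * exp _)]
  have hbx := mul_pos hb hx
  exact mul_le_mul_of_nonneg_right (abs_le.mpr ⟨by linarith, by linarith⟩) (by positivity)

end GammaIntegral

lemma hasSum_mul_sub_one_mul_geometric {r : ℝ} (hr : ‖r‖ < 1) (a x : ℝ) :
    HasSum (fun n : ℕ => (((n : ℝ) + a) * x - 1) * r ^ n)
      ((a * x - 1 + r * (1 - (a - 1) * x)) / (1 - r) ^ 2) := by
  have hr1 : 1 - r ≠ 0 := sub_ne_zero.mpr (ne_of_lt (lt_of_abs_lt hr)).symm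
  have h := ((hasSum_coe_mul_geometric_of_norm_lt_one hr).mul_left x).add
    ((hasSum_geometric_of_norm_lt_one hr).mul_left (a * x - 1))
  rw [show (a * x - 1 + r * (1 - (a - 1) * x)) / (1 - r) ^ 2 =
      x * (r / (1 - r) ^ 2) + (a * x - 1) * (1 - r)⁻¹ by field_simp; ring]
  exact h.congr_fun fun n => by ring

lemma hasSum_mul_sub_one_mul_rpow_sub_one_mul_exp_neg_mul {s x : ℝ} (hx : 0 < x) (a : ℝ) :
    HasSum (fun n : ℕ => (((n : ℝ) + a) * x - 1) * (x ^ (s - 1) * exp (-(((n : ℝ) + a) * x))))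
      (x ^ (s - 1) * exp (-a * x) *
        (a * x - 1 + exp (-x) * (1 - (a - 1) * x)) / (1 - exp (-x)) ^ 2) := by
  have hr : ‖exp (-x)‖ < 1 := by
    rw [norm_of_nonneg (exp_pos _).le, exp_lt_one_iff]
    linarith
  have hexp (n : ℕ) : exp (-(((n : ℝ) + a) * x)) = exp (-a * x) * exp (-x) ^ n := by
    rw [← exp_nat_mul, ← exp_add]
    ring_nf
  rw [mul_div_assoc]
  exact ((hasSum_mul_sub_one_mul_geometric hr a x).mul_left _).congr_fun fun n => by
    rw [hexp]
    ring

lemma summable_nat_add_rpow_neg {a s : ℝ} (ha : 0 < a) (hs : 1 < s) :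
    Summable fun n : ℕ => ((n : ℝ) + a) ^ (-s) := by
  refine ((summable_one_div_nat_add_rpow a s).mpr hs).congr fun n => ?_
  rw [abs_of_pos (by positivity), one_div, rpow_neg (by positivity)]

theorem stmt_7 (s a : ℝ) (hs : 1 < s) (ha : 1 ≤ a) :
    (s - 1) * Real.Gamma s * (∑' n : ℕ, ((n : ℝ) + a) ^ (-s)) =
      ∫ x in Ioi (0 : ℝ),
        x ^ (s - 1) * Real.exp (-a * x) *
          (a * x - 1 + Real.exp (-x) * (1 - (a - 1) * x)) / (1 - Real.exp (-x)) ^ 2 := by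
  have hs0 : 0 < s := by linarith
  have hb (n : ℕ) : 0 < (n : ℝ) + a := by positivity
  have hsum := hasSum_integral_of_summable_integral_norm
    (fun n => integrableOn_mul_sub_mul_rpow_sub_one_mul_exp_neg_mul hs0 (hb n) 1)
    (((summable_nat_add_rpow_neg (by linarith) hs).mul_left ((s + 1) * Gamma s)).of_nonneg_of_le
      (fun n => integral_nonneg fun x => norm_nonneg _)
      fun n => integral_norm_mul_sub_one_mul_rpow_sub_one_mul_exp_neg_mul_le hs0 (hb n))
  rw [← setIntegral_congr_fun measurableSet_Ioi
      fun x (hx : 0 < x) => (hasSum_mul_sub_one_mul_rpow_sub_one_mul_exp_neg_mul hx a).tsum_eq,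
    ← hsum.tsum_eq, ← tsum_mul_left]
  exact tsum_congr fun n => (integral_mul_sub_mul_rpow_sub_one_mul_exp_neg_mul hs0 (hb n) 1).symm
end

section
/- For a ≥ 1, the function h_a(x) = e^{-ax}·[ax - 1 + e^{-x}(1 - (a-1)x)]/(1 - e^{-x})² for x > 0 is a probability density on (0,∞): h_a ≥ 0 and ∫₀^∞ h_a(x) dx = 1. -/
/-!
For `x > 0`, `h_a` is the derivative of `G_a x = -x e^{-ax} / (1 - e^{-x})`. Since
`(1 - e^{-x}) / x → 1` as `x → 0⁺`, `G_a` tends to `-1` there, and for `a > 0` it tends to `0`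
at infinity, so the integral is `0 - (-1) = 1`. Nonnegativity: the numerator of `h_a` is
`(a - 1) x (1 - e^{-x}) + (e^{-x} - (1 - x))`, a sum of two nonnegative terms when `a ≥ 1`.
-/

open MeasureTheory Set Filter Topology Real

theorem integral_Ioi_of_hasDerivAt_of_nonneg_of_tendsto_nhdsGT {g g' : ℝ → ℝ} {a l₀ l : ℝ}
    (hderiv : ∀ x ∈ Ioi a, HasDerivAt g (g' x) x) (hg' : ∀ x ∈ Ioi a, 0 ≤ g' x)
    (hg₀ : Tendsto g (𝓝[>] a) (𝓝 l₀)) (hg : Tendsto g atTop (𝓝 l)) :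
    ∫ x in Ioi a, g' x = l - l₀ := by
  have hcont : ContinuousWithinAt (Function.update g a l₀) (Ici a) a := by
    rwa [continuousWithinAt_update_same, Ici_sdiff_left]
  have hderiv' : ∀ x ∈ Ioi a, HasDerivAt (Function.update g a l₀) (g' x) x := fun x hx =>
    (hderiv x hx).congr_of_eventuallyEq <| by
      filter_upwards [eventually_ne_nhds (ne_of_gt hx)] with y hy using Function.update_of_ne hy _ _
  have hlim : Tendsto (Function.update g a l₀) atTop (𝓝 l) := hg.congr' <| by
    filter_upwards [eventually_gt_atTop a] with y hy using (Function.update_of_ne hy.ne' _ _).symm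
  simpa using integral_Ioi_of_hasDerivAt_of_nonneg hcont hderiv' hg' hlim

lemma one_sub_exp_neg_pos {x : ℝ} (hx : 0 < x) : 0 < 1 - exp (-x) := by
  simpa using Real.exp_lt_one_iff.2 (neg_lt_zero.2 hx)

lemma tendsto_one_sub_exp_neg_div_nhdsNE :
    Tendsto (fun x => (1 - exp (-x)) / x) (𝓝[≠] 0) (𝓝 1) := by
  have h : HasDerivAt (fun x => 1 - exp (-x)) 1 0 := by
    simpa using ((hasDerivAt_neg' 0).exp).const_sub 1
  refine (hasDerivAt_iff_tendsto_slope.1 h).congr fun x => ?_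
  simp [slope_def_field]

noncomputable def hDensity (a x : ℝ) : ℝ :=
  exp (-a * x) * (a * x - 1 + exp (-x) * (1 - (a - 1) * x)) / (1 - exp (-x)) ^ 2

noncomputable def hAntideriv (a x : ℝ) : ℝ :=
  -(x * exp (-a * x) / (1 - exp (-x)))

lemma hDensity_nonneg {a x : ℝ} (ha : 1 ≤ a) (hx : 0 < x) : 0 ≤ hDensity a x := by
  have hnum : a * x - 1 + exp (-x) * (1 - (a - 1) * x) =
      (a - 1) * x * (1 - exp (-x)) + (exp (-x) - (-x + 1)) := by ring
  have h₁ : 0 ≤ (a - 1) * x * (1 - exp (-x)) :=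
    mul_nonneg (mul_nonneg (sub_nonneg.2 ha) hx.le) (one_sub_exp_neg_pos hx).le
  have h₂ : 0 ≤ exp (-x) - (-x + 1) := sub_nonneg.2 (add_one_le_exp _)
  rw [hDensity, hnum]
  positivity

lemma hasDerivAt_hAntideriv (a : ℝ) {x : ℝ} (hx : 0 < x) :
    HasDerivAt (hAntideriv a) (hDensity a x) x := by
  have hne := (one_sub_exp_neg_pos hx).ne'
  refine ((((hasDerivAt_id x).mul ((hasDerivAt_id x).const_mul (-a)).exp).div
    ((hasDerivAt_neg' x).exp.const_sub 1) hne).neg).congr_deriv ?_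
  simp only [hDensity, Pi.mul_apply, id]
  field_simp
  ring

lemma tendsto_hAntideriv_nhdsGT (a : ℝ) : Tendsto (hAntideriv a) (𝓝[>] 0) (𝓝 (-1)) := by
  have hexp : Tendsto (fun x => exp (-a * x)) (𝓝[>] 0) (𝓝 1) := by
    have hc : Continuous fun x => exp (-a * x) := by fun_prop
    simpa using (hc.tendsto 0).mono_left nhdsWithin_le_nhds
  have h := (hexp.div (tendsto_one_sub_exp_neg_div_nhdsNE.mono_left
    (nhdsWithin_mono _ fun y hy => ne_of_gt hy)) one_ne_zero).neg
  refine (div_one (1 : ℝ) ▸ h).congr fun x => ?_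
  simp only [Pi.div_apply, hAntideriv, div_div_eq_mul_div, mul_comm]

lemma tendsto_hAntideriv_atTop {a : ℝ} (ha : 0 < a) : Tendsto (hAntideriv a) atTop (𝓝 0) := by
  have hnum : Tendsto (fun x => x * exp (-a * x)) atTop (𝓝 0) := by
    simpa using tendsto_rpow_mul_exp_neg_mul_atTop_nhds_zero 1 a ha
  have hden : Tendsto (fun x => 1 - exp (-x)) atTop (𝓝 1) := by
    simpa using tendsto_exp_neg_atTop_nhds_zero.const_sub 1
  have h := (hnum.div hden one_ne_zero).neg
  rwa [zero_div, neg_zero] at h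

theorem stmt_8 (a : ℝ) (ha : 1 ≤ a) :
    (∀ x : ℝ, 0 < x →
        0 ≤ Real.exp (-a * x) * (a * x - 1 + Real.exp (-x) * (1 - (a - 1) * x)) /
          (1 - Real.exp (-x)) ^ 2) ∧
      (∫ x in Ioi (0 : ℝ),
          Real.exp (-a * x) * (a * x - 1 + Real.exp (-x) * (1 - (a - 1) * x)) /
            (1 - Real.exp (-x)) ^ 2) = 1 := by
  refine ⟨fun x hx => hDensity_nonneg ha hx, ?_⟩
  have h := integral_Ioi_of_hasDerivAt_of_nonneg_of_tendsto_nhdsGT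
    (fun x hx => hasDerivAt_hAntideriv a hx) (fun x hx => hDensity_nonneg ha hx)
    (tendsto_hAntideriv_nhdsGT a) (tendsto_hAntideriv_atTop (by linarith))
  simpa [hDensity] using h
end

section
/- For real s > 2 and a > 0, Γ(s)·∑_{n=0}^∞ n/(n+a)^s = ∫₀^∞ x^{s-1} e^{-ax} e^{-x}/(1 - e^{-x})² dx. -/
/-!
Expanding `e^{-x} / (1 - e^{-x})² = ∑ n e^{-n x}` turns the integrand into the Dirichlet-type
series `x^{s-1} ∑ n e^{-(n+a) x}`; integrating term by term against `x^{s-1}` gives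
`Γ(s) n / (n+a)^s` for each term, and the interchange is justified because the series of
absolute values of these integrals converges for `s > 2`.
-/

open MeasureTheory Set

lemma Complex.mellin_ofReal (f : ℝ → ℝ) (s : ℝ) :
    mellin (fun t ↦ (f t : ℂ)) s = ↑(∫ t in Ioi 0, t ^ (s - 1) * f t) := by
  rw [mellin, ← integral_complex_ofReal]
  refine setIntegral_congr_fun measurableSet_Ioi fun t ht ↦ ?_
  simp [Complex.ofReal_cpow (le_of_lt ht)]

lemma Real.hasSum_mellin {ι : Type*} [Countable ι] {a p : ι → ℝ} {F : ℝ → ℝ} {s : ℝ}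
    (hp : ∀ i, a i = 0 ∨ 0 < p i) (hs : 0 < s)
    (hF : ∀ t ∈ Ioi 0, HasSum (fun i ↦ a i * Real.exp (-p i * t)) (F t))
    (h_sum : Summable fun i ↦ |a i| / p i ^ s) :
    HasSum (fun i ↦ Real.Gamma s * a i / p i ^ s) (∫ t in Ioi 0, t ^ (s - 1) * F t) := by
  have hmellin :=
    _root_.hasSum_mellin (a := fun i ↦ (a i : ℂ)) (F := fun t ↦ (F t : ℂ)) (s := s)
      (by simpa using hp) (by simpa using hs) (fun t ht ↦ by exact_mod_cast hF t ht)
      (by simpa using h_sum)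
  have hterm : ∀ i, Complex.Gamma s * a i / (p i : ℂ) ^ (s : ℂ) =
      ((Real.Gamma s * a i / p i ^ s : ℝ) : ℂ) := fun i ↦ by
    rcases hp i with h | h
    · simp [h]
    rw [Complex.ofReal_div, Complex.ofReal_mul, Complex.ofReal_cpow h.le, Complex.Gamma_ofReal]
  simpa only [hterm, Complex.mellin_ofReal, Complex.hasSum_ofReal] using hmellin

lemma hasSum_coe_mul_exp_neg_add_mul {x : ℝ} (hx : 0 < x) (a : ℝ) :
    HasSum (fun n : ℕ ↦ (n : ℝ) * Real.exp (-(n + a) * x))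
      (Real.exp (-a * x) * Real.exp (-x) / (1 - Real.exp (-x)) ^ 2) := by
  have hr : ‖Real.exp (-x)‖ < 1 := by
    rw [Real.norm_of_nonneg (Real.exp_pos _).le]
    exact Real.exp_lt_one_iff.mpr (neg_lt_zero.mpr hx)
  have h := (hasSum_coe_mul_geometric_of_norm_lt_one hr).mul_left (Real.exp (-a * x))
  have hterm : ∀ n : ℕ,
      Real.exp (-a * x) * (n * Real.exp (-x) ^ n) = n * Real.exp (-(n + a) * x) := fun n ↦ by
    rw [← Real.exp_nat_mul, mul_left_comm, ← Real.exp_add]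
    ring_nf
  simpa only [hterm, mul_div_assoc] using h

lemma summable_coe_div_add_rpow {a s : ℝ} (ha : 0 ≤ a) (hs : 2 < s) :
    Summable fun n : ℕ ↦ (n : ℝ) / (n + a) ^ s := by
  refine ((Real.summable_one_div_nat_add_rpow a (s - 1)).2 (by linarith)).of_nonneg_of_le
    (fun n ↦ by positivity) fun n ↦ ?_
  rcases (add_nonneg n.cast_nonneg ha).eq_or_lt with h | h
  · simp [← h, Real.zero_rpow, (by linarith : s ≠ 0), (by linarith : s - 1 ≠ 0)]
  rw [abs_of_pos h, Real.rpow_sub h, Real.rpow_one, one_div_div]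
  exact div_le_div_of_nonneg_right (le_add_of_nonneg_right ha) (by positivity)

theorem stmt_10 (s a : ℝ) (hs : 2 < s) (ha : 0 < a) :
    Real.Gamma s * (∑' n : ℕ, (n : ℝ) / ((n : ℝ) + a) ^ s) =
      ∫ x in Ioi (0 : ℝ),
        x ^ (s - 1) * Real.exp (-a * x) * Real.exp (-x) / (1 - Real.exp (-x)) ^ 2 := by
  have h := Real.hasSum_mellin (a := fun n : ℕ ↦ (n : ℝ)) (p := fun n ↦ n + a) (s := s)
    (fun n ↦ Or.inr (by positivity)) (by linarith)
    (fun x hx ↦ hasSum_coe_mul_exp_neg_add_mul hx a)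
    (by simpa using summable_coe_div_add_rpow ha.le hs)
  simp only [mul_div_assoc] at h
  rw [← tsum_mul_left, h.tsum_eq]
  congr 1 with x
  ring
end

section
/- Let X be a random variable on ℝ with symmetric distribution F and all absolute moments finite, and let φ_X(t) = E(e^{itX}) be its characteristic function. Then for all a > 0 and real s > 0, ∫₀^∞ t^{s-1} e^{-at} φ_X(t) dt = Γ(s)·E((a + iX)^{-s}). -/
/-!
By Fubini, the left side is `E ∫₀^∞ t^(s-1) e^(-(a - iX) t) dt`. For real `b > 0` the inner integral
`∫₀^∞ t^(s-1) e^(-b t) dt` equals `Γ(s) b^(-s)`; both sides are holomorphic in `b` on the right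
half-plane (the left one being the complex moment generating function of the measure `t^(s-1) dt`
on `(0, ∞)`), so the identity extends to `b = a - iX`. Symmetry of `X` finally replaces
`(a - iX)^(-s)` by `(a + iX)^(-s)`.
-/

open MeasureTheory Set Complex ProbabilityTheory Filter Topology

open scoped NNReal ENNReal

lemma integrableOn_rpow_mul_exp_neg_mul {s b : ℝ} (hs : -1 < s) (hb : 0 < b) :
    IntegrableOn (fun t : ℝ => t ^ s * Real.exp (-b * t)) (Ioi 0) := by
  simpa [Real.rpow_one] using integrableOn_rpow_mul_exp_neg_mul_rpow hs zero_lt_one hb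

noncomputable def mellinMeasure (s : ℝ) : Measure ℝ :=
  (volume.restrict (Ioi 0)).withDensity fun t => ((t ^ (s - 1)).toNNReal : ℝ≥0∞)

lemma integral_mellinMeasure {E : Type*} [NormedAddCommGroup E] [NormedSpace ℂ E] (s : ℝ)
    (g : ℝ → E) : ∫ t, g t ∂mellinMeasure s = mellin g s := by
  rw [mellinMeasure, integral_withDensity_eq_integral_smul (by fun_prop)]
  refine setIntegral_congr_fun measurableSet_Ioi fun t (ht : 0 < t) => ?_
  rw [NNReal.smul_def, Real.coe_toNNReal _ (Real.rpow_nonneg ht.le _), ← Complex.coe_smul,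
    ofReal_cpow ht.le]
  push_cast
  rfl

lemma integrable_exp_mul_mellinMeasure {s u : ℝ} (hs : 0 < s) (hu : u < 0) :
    Integrable (fun t => Real.exp (u * t)) (mellinMeasure s) := by
  rw [mellinMeasure, integrable_withDensity_iff_integrable_smul (by fun_prop)]
  have h := integrableOn_rpow_mul_exp_neg_mul (s := s - 1) (by linarith) (neg_pos.mpr hu)
  refine h.congr_fun (fun t (ht : 0 < t) => ?_) measurableSet_Ioi
  simp [NNReal.smul_def, Real.coe_toNNReal _ (Real.rpow_nonneg ht.le _)]

lemma analyticOnNhd_mellin_exp_neg_mul {s : ℝ} (hs : 0 < s) :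
    AnalyticOnNhd ℂ (fun b : ℂ => mellin (fun t => cexp (-(b * t))) s) {b | 0 < b.re} := by
  have hmgf : (fun b : ℂ => mellin (fun t => cexp (-(b * t))) s) =
      fun b => complexMGF id (mellinMeasure s) (-b) := by
    ext b
    simp [complexMGF, integral_mellinMeasure]
  have hstrip : Iio 0 ⊆ interior (integrableExpSet id (mellinMeasure s)) :=
    isOpen_Iio.subset_interior_iff.mpr fun u hu => integrable_exp_mul_mellinMeasure hs hu
  rw [hmgf]
  exact analyticOnNhd_complexMGF.comp analyticOnNhd_id.neg
    fun b (hb : 0 < b.re) => hstrip (by simpa using hb)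

lemma mellin_exp_neg_mul {s : ℝ} (hs : 0 < s) {b : ℂ} (hb : 0 < b.re) :
    mellin (fun t => cexp (-(b * t))) s = Real.Gamma s * b ^ (-(s : ℂ)) := by
  have hreal : ∀ r : ℝ, 0 < r →
      mellin (fun t => cexp (-(r * t))) s = Real.Gamma s * (r : ℂ) ^ (-(s : ℂ)) := by
    intro r hr
    rw [mellin, ← Complex.Gamma_ofReal]
    simp_rw [smul_eq_mul]
    rw [integral_cpow_mul_exp_neg_mul_Ioi (by simpa using hs) hr, one_div,
      inv_cpow _ _ (by simp [arg_ofReal_of_nonneg hr.le, Real.pi_ne_zero.symm]), ← cpow_neg,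
      mul_comm]
  have hG : AnalyticOnNhd ℂ (fun b : ℂ => (Real.Gamma s : ℂ) * b ^ (-(s : ℂ))) {b | 0 < b.re} :=
    analyticOnNhd_const.mul (analyticOnNhd_id.cpow analyticOnNhd_const fun b hb => Or.inl hb)
  have hofReal : Tendsto ((↑) : ℝ → ℂ) (𝓝[>] 1) (𝓝[≠] 1) :=
    tendsto_nhdsWithin_of_tendsto_nhds_of_eventually_within _
      ((continuous_ofReal.tendsto 1).mono_left nhdsWithin_le_nhds)
      (eventually_nhdsWithin_of_forall fun r (hr : 1 < r) => by simpa using hr.ne')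
  have hfreq : ∃ᶠ b in 𝓝[≠] (1 : ℂ),
      mellin (fun t => cexp (-(b * t))) s = Real.Gamma s * b ^ (-(s : ℂ)) :=
    hofReal.frequently (eventually_nhdsWithin_of_forall
      fun r (hr : r ∈ Ioi 1) => hreal r (by linarith [mem_Ioi.mp hr])).frequently
  exact (analyticOnNhd_mellin_exp_neg_mul hs).eqOn_of_preconnected_of_frequently_eq hG
    (convex_halfSpace_re_gt 0).isPreconnected (by simp) hfreq hb

lemma integral_mul_charFun_eq_integral_integral {ν μ : Measure ℝ} [SFinite ν] [IsFiniteMeasure μ]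
    {f : ℝ → ℂ} (hf : Integrable f ν) :
    ∫ t, f t * charFun μ t ∂ν = ∫ x, ∫ t, f t * cexp (t * x * I) ∂ν ∂μ := by
  have hint : Integrable (fun p : ℝ × ℝ => f p.1 * cexp (p.1 * p.2 * I)) (ν.prod μ) :=
    (hf.comp_fst μ).mono (hf.1.comp_fst.mul (by fun_prop))
      (ae_of_all _ fun p => by simp [Complex.norm_exp])
  rw [← integral_integral_swap hint]
  simp_rw [charFun_apply_real, integral_const_mul]

theorem stmt_17_general (μ : Measure ℝ) [IsProbabilityMeasure μ]
    (hsymm : μ.map (fun x : ℝ => -x) = μ)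
    (a s : ℝ) (ha : 0 < a) (hs : 0 < s) :
    (∫ t in Ioi (0 : ℝ), ((t ^ (s - 1) * Real.exp (-a * t) : ℝ) : ℂ) *
        ∫ x : ℝ, Complex.exp ((t : ℂ) * x * Complex.I) ∂μ) =
      (Real.Gamma s : ℂ) * ∫ x : ℝ, ((a : ℂ) + (x : ℂ) * Complex.I) ^ (-(s : ℂ)) ∂μ := by
  have : μ.IsNegInvariant := ⟨hsymm⟩
  have hweight : Integrable (fun t : ℝ => ((t ^ (s - 1) * Real.exp (-a * t) : ℝ) : ℂ))
      (volume.restrict (Ioi 0)) :=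
    (integrableOn_rpow_mul_exp_neg_mul (by linarith) ha).ofReal
  simp_rw [← charFun_apply_real]
  rw [integral_mul_charFun_eq_integral_integral hweight, ← integral_neg_eq_self _ μ,
    ← integral_const_mul]
  refine integral_congr_ae (ae_of_all _ fun x => ?_)
  dsimp only
  rw [← mellin_exp_neg_mul hs (by simpa using ha)]
  refine setIntegral_congr_fun measurableSet_Ioi fun t (ht : 0 < t) => ?_
  rw [smul_eq_mul, ofReal_mul, ofReal_cpow ht.le, ofReal_exp, mul_assoc, ← Complex.exp_add]
  push_cast
  ring_nf

theorem stmt_17 (μ : Measure ℝ) [IsProbabilityMeasure μ]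
    (hsymm : μ.map (fun x : ℝ => -x) = μ)
    (hmom : ∀ n : ℕ, Integrable (fun x : ℝ => |x| ^ n) μ)
    (a s : ℝ) (ha : 0 < a) (hs : 0 < s) :
    (∫ t in Ioi (0 : ℝ), ((t ^ (s - 1) * Real.exp (-a * t) : ℝ) : ℂ) *
        ∫ x : ℝ, Complex.exp ((t : ℂ) * x * Complex.I) ∂μ) =
      (Real.Gamma s : ℂ) * ∫ x : ℝ, ((a : ℂ) + (x : ℂ) * Complex.I) ^ (-(s : ℂ)) ∂μ :=
  stmt_17_general μ hsymm a s ha hs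
end
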